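/- Let ℓ = 4 with w_s(n) and g as follows: w_s(n) = C(n,(n−s)/2) − C(n,(n−s)/2−1) when 0 ≤ s ≤ n and s ≡ n mod 2, else 0; g(t)=t+6 if t≡0 mod 4, g(t)=t+2 if t≡2 mod 4. Define ℓ_t(n) = Σ_{i≥0} (−1)^i w_{g^i(t)}(n). Then for every even n ≥ 4, ℓ_0(n) = ℓ_2(n) = 2^{n/2 − 1}. -/

import Mathlib

/-!
Pascal's rule for binomial coefficients gives `w_{s+1}(n+1) = w_s(n) + w_{s+2}(n)`. Since
`g ∘ g = (· + 8)`, the orbits of `g` split into pairs `(t + 8j, g t + 8j)`, and Pascal's rule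
applied pairwise yields `ℓ_1(n+1) = ℓ_0(n) + ℓ_2(n)` and `ℓ_0(n+1) = ℓ_2(n+1) = ℓ_1(n)`.
Hence `ℓ_1` doubles from `2k+1` to `2k+3`, so `ℓ_1(2k+1) = 2^k`.
-/

/-- `w_s(n) = C(n,(n-s)/2) - C(n,(n-s)/2 - 1)` if `0 ≤ s ≤ n` and `s ≡ n (mod 2)`,
and `0` otherwise (with the convention `C(n,-1) = 0`). -/
def wdim (s n : ℕ) : ℤ :=
  if s ≤ n ∧ (n - s) % 2 = 0 then
    (n.choose ((n - s) / 2) : ℤ) -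
      (if (n - s) / 2 = 0 then 0 else (n.choose ((n - s) / 2 - 1) : ℤ))
  else 0

/-- The `g` function for `ℓ = 4`:  `g(t) = t+6` if `t ≡ 0 (mod 4)`, `t+2` if
`t ≡ 2 (mod 4)`, `t+4` if `t ≡ 1 (mod 4)`. -/
def g4 (t : ℕ) : ℕ :=
  if t % 4 = 0 then t + 6 else if t % 4 = 2 then t + 2 else t + 4

/-- `ℓ_t(n) = Σ_{i≥0} (-1)^i w_{gⁱ(t)}(n)`; the sum is finite since `w_s(n) = 0`
for `s > n`, so it may be truncated at `i = n`. -/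
def elldim (g : ℕ → ℕ) (t n : ℕ) : ℤ :=
  ∑ i ∈ Finset.range (n + 1), (-1 : ℤ) ^ i * wdim (g^[i] t) n

open Finset

theorem wdim_eq_zero {s n : ℕ} (h : n < s ∨ (n - s) % 2 = 1) : wdim s n = 0 := by
  rw [wdim, if_neg (by omega)]

/-- The symmetric form `C(n, k - 1) = C(n, k + s + 1)` absorbs the convention `C(n, -1) = 0`. -/
theorem wdim_add_two_mul (s k : ℕ) :
    wdim s (s + 2 * k) = (s + 2 * k).choose k - (s + 2 * k).choose (k + s + 1) := by
  rw [wdim, if_pos (by omega), show (s + 2 * k - s) / 2 = k by omega]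
  rcases k with _ | k
  · simp
  · rw [if_neg k.succ_ne_zero, Nat.add_sub_cancel,
      Nat.choose_symm_of_eq_add (show s + 2 * (k + 1) = k + (k + 1 + s + 1) by ring)]

theorem wdim_succ_succ (s n : ℕ) : wdim (s + 1) (n + 1) = wdim s n + wdim (s + 2) n := by
  by_cases h : s ≤ n ∧ (n - s) % 2 = 0
  · obtain ⟨k, rfl⟩ : ∃ k, n = s + 2 * k := ⟨(n - s) / 2, by omega⟩
    have lhs := wdim_add_two_mul (s + 1) k
    rw [show s + 1 + 2 * k = s + 2 * k + 1 by ring] at lhs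
    rw [lhs, wdim_add_two_mul]
    rcases k with _ | k
    · simp [wdim_eq_zero]
    · have h2 := wdim_add_two_mul (s + 2) k
      rw [show s + 2 + 2 * k = s + 2 * (k + 1) by ring] at h2
      rw [h2, Nat.choose_succ_succ', show k + 1 + (s + 1) + 1 = (k + 1 + s + 1) + 1 by ring,
        Nat.choose_succ_succ', show k + (s + 2) + 1 = (k + 1 + s + 1) + 1 by ring]
      push_cast
      ring
  · rw [wdim_eq_zero, wdim_eq_zero, wdim_eq_zero] <;> omega

theorem wdim_zero_succ (n : ℕ) : wdim 0 (n + 1) = wdim 1 n := by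
  obtain ⟨k, rfl | rfl⟩ := Nat.even_or_odd' n
  · rw [wdim_eq_zero, wdim_eq_zero] <;> omega
  · have h0 := wdim_add_two_mul 0 (k + 1)
    have h1 := wdim_add_two_mul 1 k
    rw [show 0 + 2 * (k + 1) = 2 * k + 1 + 1 by ring] at h0
    rw [show 1 + 2 * k = 2 * k + 1 by ring] at h1
    rw [h0, h1, Nat.choose_succ_succ' (2 * k + 1) k, Nat.choose_succ_succ' (2 * k + 1) (k + 1)]
    push_cast
    ring

theorem le_iterate_of_forall_lt {g : ℕ → ℕ} (hg : ∀ s, s < g s) (t i : ℕ) : i ≤ g^[i] t := by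
  induction i with
  | zero => exact Nat.zero_le _
  | succ i ih => rw [Function.iterate_succ_apply']; exact ih.trans_lt (hg _)

theorem elldim_eq_sum_range {g : ℕ → ℕ} (hg : ∀ s, s < g s) (t : ℕ) {n N : ℕ} (hN : n < N) :
    elldim g t n = ∑ i ∈ range N, (-1) ^ i * wdim (g^[i] t) n := by
  refine sum_subset (range_subset_range.2 hN) fun i _ hin => ?_
  have hi : n < g^[i] t := (not_lt.1 (mem_range.not.1 hin)).trans (le_iterate_of_forall_lt hg t i)
  rw [wdim_eq_zero (Or.inl hi), mul_zero]

theorem elldim_eq_wdim_sub_elldim {g : ℕ → ℕ} (hg : ∀ s, s < g s) (t n : ℕ) :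
    elldim g t n = wdim t n - elldim g (g t) n := by
  rw [elldim_eq_sum_range hg t (N := n + 2) (by omega), sum_range_succ', elldim, sub_eq_neg_add,
    ← sum_neg_distrib]
  simp only [pow_succ, mul_neg_one, neg_mul, Function.iterate_succ_apply, pow_zero, one_mul,
    Function.iterate_zero_apply]

theorem sum_range_two_mul_neg_one_pow_mul {R : Type*} [CommRing R] (a : ℕ → R) (M : ℕ) :
    ∑ i ∈ range (2 * M), (-1) ^ i * a i = ∑ j ∈ range M, (a (2 * j) - a (2 * j + 1)) := by
  induction M with
  | zero => simp
  | succ M ih =>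
    rw [mul_add_one, sum_range_succ, sum_range_succ, ih, sum_range_succ, pow_succ, pow_mul,
      neg_one_sq, one_pow]
    ring

theorem lt_g4 (s : ℕ) : s < g4 s := by
  unfold g4; split_ifs <;> omega

theorem g4_g4 (s : ℕ) : g4 (g4 s) = s + 8 := by
  unfold g4; split_ifs <;> omega

theorem g4_iterate_two_mul (j s : ℕ) : g4^[2 * j] s = s + 8 * j := by
  induction j with
  | zero => rfl
  | succ j ih =>
    rw [mul_add_one, add_comm, Function.iterate_add_apply, ih, Function.iterate_succ_apply,
      Function.iterate_one, g4_g4]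
    ring

theorem elldim_g4_eq_sum (t : ℕ) {n M : ℕ} (hM : n < 2 * M) :
    elldim g4 t n = ∑ j ∈ range M, (wdim (t + 8 * j) n - wdim (g4 t + 8 * j) n) := by
  rw [elldim_eq_sum_range lt_g4 t hM, sum_range_two_mul_neg_one_pow_mul]
  simp only [g4_iterate_two_mul, Function.iterate_succ_apply]

theorem elldim_g4_succ_of_mod_four_eq_zero {t : ℕ} (ht : t % 4 = 0) (n : ℕ) :
    elldim g4 (t + 1) (n + 1) = elldim g4 t n + elldim g4 (t + 2) n := by
  have hM : n + 1 < 2 * (n + 1) := by omega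
  rw [elldim_g4_eq_sum _ hM, elldim_g4_eq_sum _ (n.lt_succ_self.trans hM),
    elldim_g4_eq_sum _ (n.lt_succ_self.trans hM), ← sum_add_distrib]
  refine sum_congr rfl fun j _ => ?_
  have h0 : g4 t = t + 6 := by rw [g4, if_pos ht]
  have h1 : g4 (t + 1) = t + 4 + 1 := by unfold g4; split_ifs <;> omega
  have h2 : g4 (t + 2) = t + 4 := by unfold g4; split_ifs <;> omega
  rw [h0, h1, h2, add_right_comm t 1, add_right_comm (t + 4) 1, wdim_succ_succ, wdim_succ_succ]
  ring_nf

theorem elldim_g4_succ_of_mod_four_eq_one {t : ℕ} (ht : t % 4 = 1) (n : ℕ) :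
    elldim g4 (t + 1) (n + 1) = elldim g4 t n := by
  have hM : n + 1 < 2 * (n + 1) := by omega
  rw [elldim_g4_eq_sum _ hM, elldim_g4_eq_sum _ (n.lt_succ_self.trans hM)]
  refine sum_congr rfl fun j _ => ?_
  have h0 : g4 t = t + 4 := by unfold g4; split_ifs <;> omega
  have h1 : g4 (t + 1) = t + 2 + 1 := by unfold g4; split_ifs <;> omega
  rw [h0, h1, add_right_comm t 1, add_right_comm (t + 2) 1, wdim_succ_succ, wdim_succ_succ]
  ring_nf

theorem elldim_g4_zero_succ (n : ℕ) : elldim g4 0 (n + 1) = elldim g4 1 n := by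
  -- `ℓ_0(n+1) = w_0(n+1) - ℓ_6(n+1)` and `ℓ_1(n) = w_1(n) - ℓ_5(n)`
  rw [elldim_eq_wdim_sub_elldim lt_g4, elldim_eq_wdim_sub_elldim lt_g4 1, wdim_zero_succ,
    show g4 0 = 5 + 1 by rfl, elldim_g4_succ_of_mod_four_eq_one (by norm_num)]
  rfl

theorem elldim_g4_one_two_mul_add_one (k : ℕ) : elldim g4 1 (2 * k + 1) = 2 ^ k := by
  induction k with
  | zero => rfl
  | succ k ih =>
    calc elldim g4 1 (2 * (k + 1) + 1)
        = elldim g4 0 (2 * k + 1 + 1) + elldim g4 2 (2 * k + 1 + 1) :=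
          elldim_g4_succ_of_mod_four_eq_zero (t := 0) rfl _
      _ = 2 ^ (k + 1) := by
          rw [elldim_g4_zero_succ, elldim_g4_succ_of_mod_four_eq_one (t := 1) rfl, ih, pow_succ,
            mul_two]

/-- For `ℓ = 4` and every even `n ≥ 4`, `ℓ_0(n) = ℓ_2(n) = 2^{n/2 - 1}`. -/
theorem ell_even_ising (n : ℕ) (hn : Even n) (h4 : 4 ≤ n) :
    elldim g4 0 n = 2 ^ (n / 2 - 1) ∧ elldim g4 2 n = 2 ^ (n / 2 - 1) := by
  obtain ⟨k, rfl⟩ : ∃ k, n = 2 * k + 1 + 1 := ⟨n / 2 - 1, by obtain ⟨m, rfl⟩ := hn; omega⟩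
  rw [show (2 * k + 1 + 1) / 2 - 1 = k by omega, elldim_g4_zero_succ,
    elldim_g4_succ_of_mod_four_eq_one (t := 1) rfl, elldim_g4_one_two_mul_add_one]
  exact ⟨rfl, rfl⟩
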